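/- arXiv:1911.04130 — 2 statements merged into one kernel-verified Lean document; each statement's English description precedes it below -/
import Mathlib

section
/- Let Q = Q+(2n−1,q) with n ≥ 2, let P0 be a point of Q, and let P and P' be two distinct points of P0⊥ \ {P0}. If the projective line ℓ spanned by P and P' is entirely contained in Q and P0 ∉ ℓ, then the number of points of Q lying in P⊥ ∩ P'⊥ but not in P0⊥ equals q^{2n−4}. -/
/-- `thgeom q k = 1 + q + ⋯ + q^(k-1)`, i.e. `θ_{k-1}` in the paper's notation,
so that `θ_j = thgeom q (j+1)` and `θ_{-1} = thgeom q 0 = 0`. -/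
def thgeom (q k : ℕ) : ℕ := ∑ i ∈ Finset.range k, q ^ i

variable {𝔽 : Type} [Field 𝔽]

/-- The hyperbolic quadratic form `f(x) = x_1x_2 + x_3x_4 + ⋯ + x_{2m-1}x_{2m}` on `𝔽^{2m}`. -/
def hypQ (m : ℕ) (v : Fin (2 * m) → 𝔽) : 𝔽 :=
  ∑ i : Fin m, v ⟨2 * i.val, by have := i.isLt; omega⟩ *
    v ⟨2 * i.val + 1, by have := i.isLt; omega⟩

/-- The polar bilinear form `b(x,y) = f(x+y) − f(x) − f(y)`. -/
def hypB (m : ℕ) (v w : Fin (2 * m) → 𝔽) : 𝔽 := hypQ m (v + w) - hypQ m v - hypQ m w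

/-- The projective point `P` lies on the hyperbolic quadric. -/
def onQ {m : ℕ} (P : Projectivization 𝔽 (Fin (2 * m) → 𝔽)) : Prop := hypQ m P.rep = 0

/-- The set of points of the hyperbolic quadric `Q⁺(2m−1, q)` inside `PG(2m−1,q)`. -/
def Qset (𝔽 : Type) [Field 𝔽] (m : ℕ) : Set (Projectivization 𝔽 (Fin (2 * m) → 𝔽)) :=
  {P | onQ P}

/-- Two points are collinear if the polar form vanishes on their representatives. -/
def Collin {m : ℕ} (P P' : Projectivization 𝔽 (Fin (2 * m) → 𝔽)) : Prop :=
  hypB m P.rep P'.rep = 0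

/-- `perp P` is `P⊥`: the set of points of the quadric collinear with `P`. -/
def perp {m : ℕ} (P : Projectivization 𝔽 (Fin (2 * m) → 𝔽)) :
    Set (Projectivization 𝔽 (Fin (2 * m) → 𝔽)) :=
  {P' | onQ P' ∧ Collin P P'}

/-- The set of projective points lying in a subspace `W` of the ambient space. -/
def pts {m : ℕ} (W : Submodule 𝔽 (Fin (2 * m) → 𝔽)) :
    Set (Projectivization 𝔽 (Fin (2 * m) → 𝔽)) :=
  {P | P.rep ∈ W}

/-- `LSet P0` is `L(P0)`: the set of lines of the quadric through `P0`
(projective lines = 2-dimensional subspaces of `V`, entirely contained in the quadric). -/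
def LSet {m : ℕ} (P0 : Projectivization 𝔽 (Fin (2 * m) → 𝔽)) :
    Set (Submodule 𝔽 (Fin (2 * m) → 𝔽)) :=
  {ℓ | Module.finrank 𝔽 ℓ = 2 ∧ P0.rep ∈ ℓ ∧ ∀ P ∈ pts ℓ, onQ P}

instance {𝔽 : Type} [Field 𝔽] [Finite 𝔽] {k : ℕ} :
    Finite (Projectivization 𝔽 (Fin k → 𝔽)) :=
  Quotient.finite _

namespace HypAux

variable {𝔽 : Type} [Field 𝔽] {m : ℕ}

/-- first index of pair `i` -/
def i0 {m : ℕ} (i : Fin m) : Fin (2 * m) := ⟨2 * i.val, by have := i.isLt; omega⟩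
/-- second index of pair `i` -/
def i1 {m : ℕ} (i : Fin m) : Fin (2 * m) := ⟨2 * i.val + 1, by have := i.isLt; omega⟩

/-- The polar form as a bilinear map. -/
noncomputable def bil (𝔽 : Type) [Field 𝔽] (m : ℕ) :
    LinearMap.BilinForm 𝔽 (Fin (2 * m) → 𝔽) :=
  LinearMap.mk₂ 𝔽
    (fun v w => ∑ i : Fin m, (v (i0 i) * w (i1 i) + v (i1 i) * w (i0 i)))
    (fun x y z => by
      rw [← Finset.sum_add_distrib]
      exact Finset.sum_congr rfl fun i _ => by simp [Pi.add_apply]; ring)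
    (fun c x y => by
      rw [Finset.smul_sum]
      exact Finset.sum_congr rfl fun i _ => by simp [Pi.smul_apply, smul_eq_mul]; ring)
    (fun x y z => by
      rw [← Finset.sum_add_distrib]
      exact Finset.sum_congr rfl fun i _ => by simp [Pi.add_apply]; ring)
    (fun c x y => by
      rw [Finset.smul_sum]
      exact Finset.sum_congr rfl fun i _ => by simp [Pi.smul_apply, smul_eq_mul]; ring)

lemma hypQ_eq (v : Fin (2 * m) → 𝔽) : hypQ m v = ∑ i : Fin m, v (i0 i) * v (i1 i) := rfl

lemma bil_apply (v w : Fin (2 * m) → 𝔽) :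
    bil 𝔽 m v w = ∑ i : Fin m, (v (i0 i) * w (i1 i) + v (i1 i) * w (i0 i)) := rfl

lemma hypB_eq_bil (v w : Fin (2 * m) → 𝔽) : hypB m v w = bil 𝔽 m v w := by
  rw [hypB, bil_apply, hypQ_eq, hypQ_eq, hypQ_eq, ← Finset.sum_sub_distrib,
    ← Finset.sum_sub_distrib]
  exact Finset.sum_congr rfl fun i _ => by simp [Pi.add_apply]; ring

lemma polar (v w : Fin (2 * m) → 𝔽) : hypQ m (v + w) = hypQ m v + hypQ m w + bil 𝔽 m v w := by
  rw [← hypB_eq_bil, hypB]; ring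

lemma hypQ_smul (c : 𝔽) (v : Fin (2 * m) → 𝔽) : hypQ m (c • v) = c ^ 2 * hypQ m v := by
  rw [hypQ_eq, hypQ_eq, Finset.mul_sum]
  exact Finset.sum_congr rfl fun i _ => by simp [Pi.smul_apply, smul_eq_mul]; ring

lemma bil_comm (v w : Fin (2 * m) → 𝔽) : bil 𝔽 m v w = bil 𝔽 m w v := by
  rw [bil_apply, bil_apply]
  exact Finset.sum_congr rfl fun i _ => by ring

lemma bil_self (v : Fin (2 * m) → 𝔽) : bil 𝔽 m v v = 2 * hypQ m v := by
  rw [bil_apply, hypQ_eq, Finset.mul_sum]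
  exact Finset.sum_congr rfl fun i _ => by ring

lemma bil_single_i1 (x : Fin (2 * m) → 𝔽) (j : Fin m) :
    bil 𝔽 m x (Pi.single (i1 j) 1) = x (i0 j) := by
  rw [bil_apply]
  rw [Finset.sum_eq_single j]
  · simp [Pi.single_apply, i0, i1, Fin.ext_iff]
  · intro i _ hij
    have h1 : i1 j ≠ i1 i := by simp [i0, i1, Fin.ext_iff]; omega
    have h2 : i1 j ≠ i0 i := by simp [i0, i1, Fin.ext_iff]; omega
    simp [Pi.single_apply, h1.symm, h2.symm,
      (by simp [i0,i1,Fin.ext_iff]; omega : i1 i ≠ i1 j),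
      (by simp [i0,i1,Fin.ext_iff]; omega : i0 i ≠ i1 j)]
  · simp

lemma bil_single_i0 (x : Fin (2 * m) → 𝔽) (j : Fin m) :
    bil 𝔽 m x (Pi.single (i0 j) 1) = x (i1 j) := by
  rw [bil_apply]
  rw [Finset.sum_eq_single j]
  · simp [Pi.single_apply, i0, i1, Fin.ext_iff]
  · intro i _ hij
    simp [Pi.single_apply,
      (by simp [i0,i1,Fin.ext_iff]; omega : i1 i ≠ i0 j),
      (by simp [i0,i1,Fin.ext_iff]; omega : i0 i ≠ i0 j)]
  · simp

lemma bil_nondeg (x : Fin (2 * m) → 𝔽) (h : ∀ y, bil 𝔽 m x y = 0) : x = 0 := by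
  funext j
  rcases Nat.even_or_odd j.val with he | ho
  · obtain ⟨a, ha⟩ := he
    have hj : j = i0 ⟨a, by have := j.isLt; omega⟩ := by simp [i0, Fin.ext_iff]; omega
    rw [hj, ← bil_single_i1 x ⟨a, _⟩, h]; rfl
  · obtain ⟨a, ha⟩ := ho
    have hj : j = i1 ⟨a, by have := j.isLt; omega⟩ := by simp [i1, Fin.ext_iff]; omega
    rw [hj, ← bil_single_i0 x ⟨a, _⟩, h]; rfl

end HypAux

namespace HypAux

variable {𝔽 : Type} [Field 𝔽]

lemma count_main [Fintype 𝔽] (m : ℕ) (hm : 2 ≤ m) (u u' w : Fin (2 * m) → 𝔽)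
    (hli : LinearIndependent 𝔽 ![w, u, u'])
    (hfw : hypQ m w = 0) (hwu : bil 𝔽 m w u = 0) (hwu' : bil 𝔽 m w u' = 0) :
    Nat.card {x : Fin (2 * m) → 𝔽 //
        hypQ m x = 0 ∧ bil 𝔽 m w x = 1 ∧ bil 𝔽 m u x = 0 ∧ bil 𝔽 m u' x = 0}
      = Fintype.card 𝔽 ^ (2 * m - 4) := by
  classical
  set L : (Fin (2 * m) → 𝔽) →ₗ[𝔽] (Fin 3 → 𝔽) :=
    LinearMap.pi ![bil 𝔽 m w, bil 𝔽 m u, bil 𝔽 m u'] with hLdef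
  have hLapp : ∀ x, L x = ![bil 𝔽 m w x, bil 𝔽 m u x, bil 𝔽 m u' x] := by
    intro x; funext i; fin_cases i <;> simp [hLdef]
  -- surjectivity of L
  have hsurj : Function.Surjective L := by
    rw [← LinearMap.range_eq_top]
    by_contra hne
    obtain ⟨φ, hφ0, hφ⟩ := Submodule.exists_dual_map_eq_bot_of_lt_top
      (lt_top_iff_ne_top.mpr hne) inferInstance
    have hφL : ∀ x, φ (L x) = 0 := by
      intro x
      have hmem : φ (L x) ∈ (LinearMap.range L).map φ :=
        Submodule.mem_map_of_mem (LinearMap.mem_range_self L x)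
      rw [hφ] at hmem; exact (Submodule.mem_bot 𝔽).mp hmem
    set c : Fin 3 → 𝔽 := fun i => φ (Pi.single i 1) with hc
    have hφy : ∀ y : Fin 3 → 𝔽, φ y = ∑ i, y i * c i := by
      intro y
      conv_lhs => rw [← Finset.univ_sum_single y]
      rw [map_sum]
      refine Finset.sum_congr rfl fun i _ => ?_
      have h1 : (Pi.single i (y i) : Fin 3 → 𝔽) = y i • (Pi.single i (1 : 𝔽) : Fin 3 → 𝔽) := by
        rw [← Pi.single_smul, smul_eq_mul, mul_one]
      rw [h1, map_smul, smul_eq_mul]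
    have hzero : c 0 • w + c 1 • u + c 2 • u' = 0 := by
      apply bil_nondeg
      intro y
      have h2 := hφL y
      rw [hφy, hLapp] at h2
      rw [Fin.sum_univ_three] at h2
      simp only [Matrix.cons_val_zero, Matrix.cons_val_one, Matrix.head_cons,
        Matrix.cons_val_two, Matrix.tail_cons] at h2
      simp only [map_add, map_smul, LinearMap.add_apply, LinearMap.smul_apply, smul_eq_mul]
      linear_combination h2
    have hc0 : ∀ i, c i = 0 := by
      have h3 := Fintype.linearIndependent_iff.mp hli c
      apply h3
      rw [Fin.sum_univ_three]
      simpa using hzero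
    apply hφ0
    apply LinearMap.ext
    intro y
    rw [hφy]
    simp [hc0]
  obtain ⟨x₀, hx₀⟩ := hsurj (Pi.single 0 1)
  -- characterize the fiber
  have hL : ∀ x, L x = Pi.single 0 1 ↔
      (bil 𝔽 m w x = 1 ∧ bil 𝔽 m u x = 0 ∧ bil 𝔽 m u' x = 0) := by
    intro x
    rw [hLapp]
    constructor
    · intro h
      refine ⟨?_, ?_, ?_⟩
      · have := congrFun h 0; simpa using this
      · have := congrFun h 1; simpa using this
      · have := congrFun h 2; simpa using this
    · rintro ⟨h1, h2, h3⟩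
      funext i; fin_cases i <;> simp [h1, h2, h3, Pi.single_apply]
  -- the fiber is a coset of the kernel
  have e1 : {x // L x = Pi.single 0 1} ≃ ↥(LinearMap.ker L) :=
    { toFun := fun a => ⟨a.1 - x₀, by
        rw [LinearMap.mem_ker, map_sub, a.2, hx₀, sub_self]⟩
      invFun := fun k => ⟨x₀ + k.1, by
        rw [map_add, hx₀, LinearMap.mem_ker.mp k.2, add_zero]⟩
      left_inv := fun a => Subtype.ext (by simp)
      right_inv := fun k => Subtype.ext (by simp) }
  -- cardinality of the kernel
  have hker : Nat.card ↥(LinearMap.ker L) = Fintype.card 𝔽 ^ (2 * m - 3) := by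
    haveI : Fintype ↥(LinearMap.ker L) := Fintype.ofFinite _
    rw [Nat.card_eq_fintype_card, Module.card_eq_pow_finrank (K := 𝔽)]
    congr 1
    have h1 := LinearMap.finrank_range_add_finrank_ker L
    rw [LinearMap.range_eq_top.mpr hsurj, finrank_top] at h1
    have h2 : Module.finrank 𝔽 (Fin 3 → 𝔽) = 3 := Module.finrank_fin_fun 𝔽
    have h3 : Module.finrank 𝔽 (Fin (2 * m) → 𝔽) = 2 * m := Module.finrank_fin_fun 𝔽
    rw [h2, h3] at h1
    omega
  -- the translation equivalence
  have e2 : {x : Fin (2 * m) → 𝔽 //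
      hypQ m x = 0 ∧ bil 𝔽 m w x = 1 ∧ bil 𝔽 m u x = 0 ∧ bil 𝔽 m u' x = 0} × 𝔽 ≃
      {x // L x = Pi.single 0 1} := by
    have hbww : bil 𝔽 m w w = 0 := by rw [bil_self, hfw, mul_zero]
    have hbuw : bil 𝔽 m u w = 0 := by rw [bil_comm]; exact hwu
    have hbu'w : bil 𝔽 m u' w = 0 := by rw [bil_comm]; exact hwu'
    refine
      { toFun := fun p => ⟨p.1.1 + p.2 • w, (hL _).mpr ⟨?_, ?_, ?_⟩⟩
        invFun := fun y => (⟨y.1 - hypQ m y.1 • w, ?_, ?_, ?_, ?_⟩, hypQ m y.1)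
        left_inv := ?_
        right_inv := ?_ }
    · rw [map_add, map_smul, p.1.2.2.1, hbww, smul_zero, add_zero]
    · rw [map_add, map_smul, p.1.2.2.2.1, hbuw, smul_zero, add_zero]
    · rw [map_add, map_smul, p.1.2.2.2.2, hbu'w, smul_zero, add_zero]
    · -- hypQ (y - t • w) = 0
      obtain ⟨h1, h2, h3⟩ := (hL _).mp y.2
      rw [sub_eq_add_neg, ← neg_smul, polar, hypQ_smul, hfw, mul_zero, add_zero,
        map_smul, smul_eq_mul, bil_comm _ w, h1, mul_one]
      exact add_neg_cancel _
    · obtain ⟨h1, h2, h3⟩ := (hL _).mp y.2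
      rw [map_sub, map_smul, h1, hbww, smul_zero, sub_zero]
    · obtain ⟨h1, h2, h3⟩ := (hL _).mp y.2
      rw [map_sub, map_smul, h2, hbuw, smul_zero, sub_zero]
    · obtain ⟨h1, h2, h3⟩ := (hL _).mp y.2
      rw [map_sub, map_smul, h3, hbu'w, smul_zero, sub_zero]
    · rintro ⟨⟨x, hx1, hx2, hx3, hx4⟩, t⟩
      have hQ : hypQ m (x + t • w) = t := by
        rw [polar, hx1, hypQ_smul, hfw, mul_zero, add_zero, zero_add,
          map_smul, smul_eq_mul, bil_comm _ w, hx2, mul_one]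
      have h5 : (x + t • w) - hypQ m (x + t • w) • w = x := by
        rw [hQ]; exact add_sub_cancel_right x (t • w)
      exact Prod.ext (Subtype.ext h5) hQ
    · rintro ⟨y, hy⟩
      apply Subtype.ext
      simp
  -- put everything together
  have key : Nat.card {x : Fin (2 * m) → 𝔽 //
      hypQ m x = 0 ∧ bil 𝔽 m w x = 1 ∧ bil 𝔽 m u x = 0 ∧ bil 𝔽 m u' x = 0} *
      Fintype.card 𝔽 = Fintype.card 𝔽 ^ (2 * m - 3) := by
    rw [← Nat.card_eq_fintype_card (α := 𝔽), ← Nat.card_prod, Nat.card_congr e2,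
      Nat.card_congr e1, hker, Nat.card_eq_fintype_card]
  have hpos : 0 < Fintype.card 𝔽 := Fintype.card_pos
  have hexp : 2 * m - 3 = (2 * m - 4) + 1 := by omega
  rw [hexp, pow_succ] at key
  exact Nat.eq_of_mul_eq_mul_right hpos key

end HypAux


open HypAux in
/-- In `Q⁺(2n−1,q)`, `n ≥ 2`: if `P, P'` are distinct points of
`P0⊥ \ {P0}`, the line `ℓ = ⟨P,P'⟩` lies entirely on the quadric, and `P0 ∉ ℓ`,
then `|(P⊥ ∩ P'⊥) \ P0⊥| = q^(2n−4)`. -/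
theorem perp_inter_count_of_line_on_quadric
    {𝔽 : Type} [Field 𝔽] [Fintype 𝔽] (q n : ℕ) (hq : Fintype.card 𝔽 = q) (hn : 2 ≤ n)
    (P0 P P' : Projectivization 𝔽 (Fin (2 * n) → 𝔽))
    (hP0 : P0 ∈ Qset 𝔽 n)
    (hP : P ∈ perp P0 \ {P0}) (hP' : P' ∈ perp P0 \ {P0}) (hPP' : P ≠ P')
    (ℓ : Submodule 𝔽 (Fin (2 * n) → 𝔽))
    (hℓ : ℓ = Submodule.span 𝔽 {Projectivization.rep P, Projectivization.rep P'})
    (hℓQ : ∀ R ∈ pts ℓ, onQ R) (hP0ℓ : P0 ∉ pts ℓ) :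
    ((perp P ∩ perp P') \ perp P0).ncard = q ^ (2 * n - 4) := by

  classical
  have hfw : hypQ n P0.rep = 0 := hP0
  have hwu : bil 𝔽 n P0.rep P.rep = 0 := by
    have h := hP.1.2; rwa [Collin, hypB_eq_bil] at h
  have hwu' : bil 𝔽 n P0.rep P'.rep = 0 := by
    have h := hP'.1.2; rwa [Collin, hypB_eq_bil] at h
  have hu0 : P.rep ≠ 0 := P.rep_nonzero
  have hu'0 : P'.rep ≠ 0 := P'.rep_nonzero
  have hpair : LinearIndependent 𝔽 ![P.rep, P'.rep] := by
    rw [LinearIndependent.pair_iff' hu0]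
    intro a ha
    apply hPP'
    calc P = Projectivization.mk 𝔽 P.rep hu0 := (Projectivization.mk_rep P).symm
      _ = Projectivization.mk 𝔽 P'.rep hu'0 := by
          rw [Projectivization.mk_eq_mk_iff']
          refine ⟨a⁻¹, ?_⟩
          have ha' : a ≠ 0 := by rintro rfl; rw [zero_smul] at ha; exact hu'0 ha.symm
          rw [← ha, smul_smul, inv_mul_cancel₀ ha', one_smul]
      _ = P' := Projectivization.mk_rep P'
  have hw_span : P0.rep ∉ Submodule.span 𝔽 {P.rep, P'.rep} := by
    intro hmem
    exact hP0ℓ (by rw [hℓ]; exact hmem)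
  have hrange : Set.range ![P.rep, P'.rep] = {P.rep, P'.rep} := by
    simp [Matrix.range_cons, Matrix.range_empty]
    exact Set.pair_comm _ _
  have hli : LinearIndependent 𝔽 ![P0.rep, P.rep, P'.rep] := by
    refine LinearIndependent.fin_cons hpair ?_
    rw [hrange]
    exact hw_span
  -- characterization of the target set
  have hmemS : ∀ R : Projectivization 𝔽 (Fin (2 * n) → 𝔽),
      R ∈ (perp P ∩ perp P') \ perp P0 ↔
      (hypQ n R.rep = 0 ∧ bil 𝔽 n P.rep R.rep = 0 ∧ bil 𝔽 n P'.rep R.rep = 0 ∧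
        bil 𝔽 n P0.rep R.rep ≠ 0) := by
    intro R
    simp only [Set.mem_diff, Set.mem_inter_iff, perp, Set.mem_setOf_eq, Collin, onQ,
      hypB_eq_bil]
    constructor
    · rintro ⟨⟨⟨h1, h2⟩, ⟨-, h3⟩⟩, h4⟩
      exact ⟨h1, h2, h3, fun hc => h4 ⟨h1, hc⟩⟩
    · rintro ⟨h1, h2, h3, h4⟩
      exact ⟨⟨⟨h1, h2⟩, h1, h3⟩, fun hc => h4 hc.2⟩
  -- the normalized-vector model of the target set
  have hx0 : ∀ x : {x : Fin (2 * n) → 𝔽 // hypQ n x = 0 ∧ bil 𝔽 n P0.rep x = 1 ∧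
      bil 𝔽 n P.rep x = 0 ∧ bil 𝔽 n P'.rep x = 0}, x.1 ≠ 0 := by
    rintro ⟨x, h1, h2, h3, h4⟩ rfl
    rw [map_zero] at h2
    exact one_ne_zero h2.symm
  let e : ↥((perp P ∩ perp P') \ perp P0) ≃
      {x : Fin (2 * n) → 𝔽 // hypQ n x = 0 ∧ bil 𝔽 n P0.rep x = 1 ∧
        bil 𝔽 n P.rep x = 0 ∧ bil 𝔽 n P'.rep x = 0} :=
    { toFun := fun R => ⟨(bil 𝔽 n P0.rep R.1.rep)⁻¹ • R.1.rep, by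
        obtain ⟨h1, h2, h3, h4⟩ := (hmemS R.1).mp R.2
        refine ⟨?_, ?_, ?_, ?_⟩
        · rw [hypQ_smul, h1, mul_zero]
        · rw [map_smul, smul_eq_mul, inv_mul_cancel₀ h4]
        · rw [map_smul, smul_eq_mul, h2, mul_zero]
        · rw [map_smul, smul_eq_mul, h3, mul_zero]⟩
      invFun := fun x => ⟨Projectivization.mk 𝔽 x.1 (hx0 x), by
        obtain ⟨a, ha⟩ := Projectivization.exists_smul_eq_mk_rep 𝔽 x.1 (hx0 x)
        obtain ⟨h1, h2, h3, h4⟩ := x.2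
        refine (hmemS _).mpr ?_
        rw [← ha, Units.smul_def]
        refine ⟨?_, ?_, ?_, ?_⟩
        · rw [hypQ_smul, h1, mul_zero]
        · rw [map_smul, smul_eq_mul, h3, mul_zero]
        · rw [map_smul, smul_eq_mul, h4, mul_zero]
        · rw [map_smul, smul_eq_mul, h2, mul_one]
          exact a.ne_zero⟩
      left_inv := fun R => by
        apply Subtype.ext
        obtain ⟨h1, h2, h3, h4⟩ := (hmemS R.1).mp R.2
        conv_rhs => rw [← Projectivization.mk_rep R.1]
        rw [Projectivization.mk_eq_mk_iff']
        exact ⟨(bil 𝔽 n P0.rep R.1.rep)⁻¹, rfl⟩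
      right_inv := fun x => by
        apply Subtype.ext
        obtain ⟨a, ha⟩ := Projectivization.exists_smul_eq_mk_rep 𝔽 x.1 (hx0 x)
        obtain ⟨h1, h2, h3, h4⟩ := x.2
        show (bil 𝔽 n P0.rep (Projectivization.mk 𝔽 x.1 (hx0 x)).rep)⁻¹ •
          (Projectivization.mk 𝔽 x.1 (hx0 x)).rep = x.1
        rw [← ha, Units.smul_def, map_smul, smul_eq_mul, h2, mul_one, smul_smul,
          inv_mul_cancel₀ a.ne_zero, one_smul] }
  calc ((perp P ∩ perp P') \ perp P0).ncard
      = Nat.card ↥((perp P ∩ perp P') \ perp P0) := (Nat.card_coe_set_eq _).symm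
    _ = Nat.card {x : Fin (2 * n) → 𝔽 // hypQ n x = 0 ∧ bil 𝔽 n P0.rep x = 1 ∧
        bil 𝔽 n P.rep x = 0 ∧ bil 𝔽 n P'.rep x = 0} := Nat.card_congr e
    _ = Fintype.card 𝔽 ^ (2 * n - 4) :=
        count_main n hn P.rep P'.rep P0.rep hli hfw hwu hwu'
    _ = q ^ (2 * n - 4) := by rw [hq]
end

section
/- Let Q = Q+(2n−1,q) with n ≥ 2 and let μ be an integer-valued function on the points of Q satisfying Property (*) with parameter x, where x is a positive integer. Then Σ_{P∈Q} μ(P) = x·θ_{n−1}. -/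
variable {𝔽 : Type} [Field 𝔽]

/-- Property (*): for every point `P` of the quadric `Q⁺(2n−1,q)`,
`Σ_{P1 ∈ P⊥} μ(P1) = x·θ_{n−2} + q^{n−1}·μ(P)`. -/
def PropStar (q n x : ℕ) {𝔽 : Type} [Field 𝔽]
    (μ : Projectivization 𝔽 (Fin (2 * n) → 𝔽) → ℤ) : Prop :=
  ∀ P ∈ Qset 𝔽 n,
    ∑ᶠ P1 ∈ perp P, μ P1 = (x : ℤ) * thgeom q (n - 1) + (q : ℤ) ^ (n - 1) * μ P

/-- Property (**): for every pair `P1, P2` of non-collinear points of the quadric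
`Q⁺(2n−1,q)`, `Σ_{P' ∈ {P1,P2}⊥} μ(P') = x·θ_{n−3} + q^{n−2}·(μ(P1)+μ(P2))`. -/
def PropStarStar (q n x : ℕ) {𝔽 : Type} [Field 𝔽]
    (μ : Projectivization 𝔽 (Fin (2 * n) → 𝔽) → ℤ) : Prop :=
  ∀ P1 ∈ Qset 𝔽 n, ∀ P2 ∈ Qset 𝔽 n, ¬ Collin P1 P2 →
    ∑ᶠ P' ∈ perp P1 ∩ perp P2, μ P' =
      (x : ℤ) * thgeom q (n - 2) + (q : ℤ) ^ (n - 2) * (μ P1 + μ P2)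

section HyperbolicForm

variable {m : ℕ}

lemma hypB_eq_sum (u v : Fin (2 * m) → 𝔽) :
    hypB m u v = ∑ i : Fin m, (u ⟨2 * i.val, by omega⟩ * v ⟨2 * i.val + 1, by omega⟩ +
      u ⟨2 * i.val + 1, by omega⟩ * v ⟨2 * i.val, by omega⟩) := by
  simp only [hypB, hypQ, ← Finset.sum_sub_distrib, Pi.add_apply]
  exact Finset.sum_congr rfl fun i _ => by ring

lemma hypB_comm (u v : Fin (2 * m) → 𝔽) : hypB m u v = hypB m v u := by
  rw [hypB, hypB, add_comm]
  ring

lemma hypQ_smul (c : 𝔽) (v : Fin (2 * m) → 𝔽) : hypQ m (c • v) = c ^ 2 * hypQ m v := by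
  simp only [hypQ, Finset.mul_sum, Pi.smul_apply, smul_eq_mul]
  exact Finset.sum_congr rfl fun i _ => by ring

lemma hypB_add_smul_right (u v w : Fin (2 * m) → 𝔽) (c : 𝔽) :
    hypB m u (v + c • w) = hypB m u v + c * hypB m u w := by
  simp only [hypB_eq_sum, Finset.mul_sum, ← Finset.sum_add_distrib, Pi.add_apply, Pi.smul_apply,
    smul_eq_mul]
  exact Finset.sum_congr rfl fun i _ => by ring

lemma hypQ_zero : hypQ m (0 : Fin (2 * m) → 𝔽) = 0 := by
  simpa using hypQ_smul (0 : 𝔽) (0 : Fin (2 * m) → 𝔽)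

lemma hypB_zero_right (u : Fin (2 * m) → 𝔽) : hypB m u 0 = 0 := by
  simp [hypB, hypQ_zero]

lemma hypB_smul_right (u v : Fin (2 * m) → 𝔽) (c : 𝔽) : hypB m u (c • v) = c * hypB m u v := by
  simpa [hypB_zero_right] using hypB_add_smul_right u 0 v c

lemma hypB_self (u : Fin (2 * m) → 𝔽) : hypB m u u = 2 * hypQ m u := by
  rw [hypB, ← two_smul 𝔽 u, hypQ_smul]
  ring

lemma hypQ_add_smul (v u : Fin (2 * m) → 𝔽) (c : 𝔽) :
    hypQ m (v + c • u) = hypQ m v + c * hypB m u v + c ^ 2 * hypQ m u := by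
  have h : hypQ m (v + c • u) = hypQ m v + hypQ m (c • u) + hypB m v (c • u) := by
    rw [hypB]; ring
  rw [h, hypQ_smul, hypB_smul_right, hypB_comm]
  ring

lemma hypQ_succ (v : Fin (2 * (m + 1)) → 𝔽) :
    hypQ (m + 1) v = v 0 * v 1 + hypQ m (Fin.tail (Fin.tail v)) := by
  rw [hypQ, Fin.sum_univ_succ]
  rfl

-- `Fin (2 * (m + 1))` unfolds to `Fin (2 * m + 1 + 1)`, the shape `Fin.cons` needs.
lemma hypQ_cons_cons (a b : 𝔽) (w : Fin (2 * m) → 𝔽) :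
    hypQ (m + 1) (Fin.cons a (Fin.cons b w) : Fin (2 * m + 1 + 1) → 𝔽) = a * b + hypQ m w :=
  hypQ_succ _

lemma hypB_succ (u v : Fin (2 * (m + 1)) → 𝔽) :
    hypB (m + 1) u v =
      u 0 * v 1 + u 1 * v 0 + hypB m (Fin.tail (Fin.tail u)) (Fin.tail (Fin.tail v)) := by
  simp only [hypB, hypQ_succ]
  change (u 0 + v 0) * (u 1 + v 1) +
    hypQ m (Fin.tail (Fin.tail u) + Fin.tail (Fin.tail v)) - _ - _ = _
  ring

lemma exists_hypB_eq_one (u : Fin (2 * m) → 𝔽) (hu : u ≠ 0) :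
    ∃ w, hypB m u w = 1 := by
  induction m with
  | zero => exact absurd (funext fun i => absurd i.isLt (by omega)) hu
  | succ m ih =>
    by_cases h0 : u 0 = 0
    · by_cases h1 : u 1 = 0
      · have htail : Fin.tail (Fin.tail u) ≠ 0 := by
          intro h
          apply hu
          funext i
          rcases i with ⟨_ | _ | k, hk⟩
          · exact h0
          · exact h1
          · exact congrFun h ⟨k, by change k < 2 * m; omega⟩
        obtain ⟨w, hw⟩ := ih _ htail
        refine ⟨Fin.cons 0 (Fin.cons 0 w), ?_⟩
        rw [hypB_succ]
        simpa using hw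
      · refine ⟨Fin.cons (u 1)⁻¹ (Fin.cons 0 0), ?_⟩
        rw [hypB_succ]
        simp [h1, hypB_zero_right]
    · refine ⟨Fin.cons 0 (Fin.cons (u 0)⁻¹ 0), ?_⟩
      rw [hypB_succ]
      simp [h0, hypB_zero_right]

end HyperbolicForm

theorem Nat.card_subtype_and_add_card_subtype_and_not {α : Type*} [Finite α] (p r : α → Prop) :
    Nat.card {x // p x ∧ r x} + Nat.card {x // p x ∧ ¬r x} = Nat.card {x // p x} := by
  classical
  rw [← Nat.card_sum]
  exact Nat.card_congr <|
    ((Equiv.subtypeSubtypeEquivSubtypeInter p r).sumCongr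
      (Equiv.subtypeSubtypeEquivSubtypeInter p (¬r ·))).symm.trans (Equiv.sumCompl _)

section Counting

variable {m : ℕ}

lemma card_isotropic_hypB_ne_zero (u : Fin (2 * m) → 𝔽) :
    Nat.card {v // hypQ m v = 0 ∧ hypB m u v ≠ 0} =
      Nat.card 𝔽ˣ * Nat.card {v // hypQ m v = 0 ∧ hypB m u v = 1} := by
  let e : {v // hypQ m v = 0 ∧ hypB m u v ≠ 0} ≃
      𝔽ˣ × {v // hypQ m v = 0 ∧ hypB m u v = 1} :=
    { toFun := fun v => (Units.mk0 _ v.2.2, ⟨(hypB m u v.1)⁻¹ • v.1, by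
          rw [hypQ_smul, hypB_smul_right, v.2.1, inv_mul_cancel₀ v.2.2, mul_zero]
          exact ⟨rfl, rfl⟩⟩)
      invFun := fun p => ⟨(p.1 : 𝔽) • p.2.1, by
          rw [hypQ_smul, hypB_smul_right, p.2.2.1, p.2.2.2, mul_zero, mul_one]
          exact ⟨rfl, p.1.ne_zero⟩⟩
      left_inv := fun v => by ext; simp [v.2.2]
      right_inv := fun ⟨c, v, hv0, hv1⟩ => by
        have hc : hypB m u ((c : 𝔽) • v) = c := by rw [hypB_smul_right, hv1, mul_one]
        ext <;> simp [hc] }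
  rw [Nat.card_congr e, Nat.card_prod]

lemma card_hypB_eq_one_mul {u : Fin (2 * m) → 𝔽} (hu : u ≠ 0) :
    Nat.card {v // hypB m u v = 1} * Nat.card 𝔽 = Nat.card 𝔽 ^ (2 * m) := by
  obtain ⟨w, hw⟩ := exists_hypB_eq_one u hu
  let e : {v // hypB m u v = 1} × 𝔽 ≃ (Fin (2 * m) → 𝔽) :=
    { toFun := fun p => p.1.1 + p.2 • w
      invFun := fun v => (⟨v + (1 - hypB m u v) • w, by rw [hypB_add_smul_right, hw]; ring⟩,
        hypB m u v - 1)
      left_inv := fun ⟨⟨v, hv⟩, s⟩ => by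
        have hs : hypB m u (v + s • w) = 1 + s := by rw [hypB_add_smul_right, hv, hw, mul_one]
        refine Prod.ext (Subtype.ext ?_) ?_ <;> dsimp only <;> rw [hs]
        · module
        · ring
      right_inv := fun v => by dsimp only; module }
  rw [← Nat.card_prod, Nat.card_congr e, Nat.card_fun, Nat.card_fin]

lemma card_isotropic_hypB_eq_one_mul {u : Fin (2 * m) → 𝔽} (hu : hypQ m u = 0) :
    Nat.card {v // hypQ m v = 0 ∧ hypB m u v = 1} * Nat.card 𝔽 =
      Nat.card {v // hypB m u v = 1} := by
  have huu : hypB m u u = 0 := by rw [hypB_self, hu, mul_zero]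
  -- Along `v + s • u` the form `hypB m u` stays `1` while `hypQ m` takes the value `s`.
  let e : {v // hypQ m v = 0 ∧ hypB m u v = 1} × 𝔽 ≃ {v // hypB m u v = 1} :=
    { toFun := fun p => ⟨p.1.1 + p.2 • u, by rw [hypB_add_smul_right, p.1.2.2, huu]; ring⟩
      invFun := fun v => (⟨v.1 + (-hypQ m v.1) • u, by
          rw [hypQ_add_smul, hypB_add_smul_right, v.2, hu, huu]; constructor <;> ring⟩,
        hypQ m v.1)
      left_inv := fun ⟨⟨v, hv0, hv1⟩, s⟩ => by
        have hs : hypQ m (v + s • u) = s := by rw [hypQ_add_smul, hv0, hv1, hu]; ring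
        refine Prod.ext (Subtype.ext ?_) ?_ <;> dsimp only <;> rw [hs]
        module
      right_inv := fun v => Subtype.ext <| by dsimp only; module }
  rw [← Nat.card_prod, Nat.card_congr e]

lemma card_isotropic_hypB_ne_zero_succ [Finite 𝔽] {u : Fin (2 * (m + 1)) → 𝔽} (hu0 : u ≠ 0)
    (hu : hypQ (m + 1) u = 0) :
    Nat.card {v // hypQ (m + 1) v = 0 ∧ hypB (m + 1) u v ≠ 0} =
      (Nat.card 𝔽 - 1) * Nat.card 𝔽 ^ (2 * m) := by
  have hq : 0 < Nat.card 𝔽 := Nat.card_pos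
  have h := card_hypB_eq_one_mul hu0
  rw [← card_isotropic_hypB_eq_one_mul hu,
    show Nat.card 𝔽 ^ (2 * (m + 1)) = Nat.card 𝔽 ^ (2 * m) * Nat.card 𝔽 * Nat.card 𝔽 by ring] at h
  rw [card_isotropic_hypB_ne_zero, Nat.card_units,
    Nat.eq_of_mul_eq_mul_right hq (Nat.eq_of_mul_eq_mul_right hq h)]

end Counting

section Cone

variable {m : ℕ}

lemma card_isotropic_snd_eq_zero :
    Nat.card {v : Fin (2 * (m + 1)) → 𝔽 // hypQ (m + 1) v = 0 ∧ v 1 = 0} =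
      Nat.card 𝔽 * Nat.card {w : Fin (2 * m) → 𝔽 // hypQ m w = 0} := by
  let e : {v : Fin (2 * (m + 1)) → 𝔽 // hypQ (m + 1) v = 0 ∧ v 1 = 0} ≃
      𝔽 × {w : Fin (2 * m) → 𝔽 // hypQ m w = 0} :=
    { toFun := fun v => (v.1 0, ⟨Fin.tail (Fin.tail v.1), by
          simpa [hypQ_succ, v.2.2] using v.2.1⟩)
      invFun := fun p => ⟨Fin.cons p.1 (Fin.cons 0 p.2.1), by
          rw [hypQ_cons_cons, p.2.2]; simp⟩
      left_inv := fun ⟨v, hv0, hv1⟩ => by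
        refine Subtype.ext (funext fun i => ?_)
        rcases i with ⟨_ | _ | k, hk⟩
        · rfl
        · exact hv1.symm
        · rfl
      right_inv := fun ⟨a, w, hw⟩ => rfl }
  rw [Nat.card_congr e, Nat.card_prod]

lemma card_isotropic_succ [Finite 𝔽] :
    Nat.card {v : Fin (2 * (m + 1)) → 𝔽 // hypQ (m + 1) v = 0} =
      Nat.card 𝔽 * Nat.card {w : Fin (2 * m) → 𝔽 // hypQ m w = 0} +
        (Nat.card 𝔽 - 1) * Nat.card 𝔽 ^ (2 * m) := by
  let u : Fin (2 * (m + 1)) → 𝔽 := Fin.cons 1 (Fin.cons 0 0)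
  have hu0 : u ≠ 0 := fun h => one_ne_zero (congrFun h 0)
  have hu : hypQ (m + 1) u = 0 := by simp [u, hypQ_cons_cons, hypQ_zero]
  have hBu : ∀ v, hypB (m + 1) u v = v 1 := fun v => by
    simp [hypB_succ, u, hypB_comm 0, hypB_zero_right]
  rw [← Nat.card_subtype_and_add_card_subtype_and_not _ (fun v => v 1 = 0),
    card_isotropic_snd_eq_zero, ← card_isotropic_hypB_ne_zero_succ hu0 hu]
  simp only [hBu]

lemma card_isotropic_mul [Finite 𝔽] :
    Nat.card {v : Fin (2 * m) → 𝔽 // hypQ m v = 0} * Nat.card 𝔽 =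
      Nat.card 𝔽 ^ (2 * m) + (Nat.card 𝔽 - 1) * Nat.card 𝔽 ^ m := by
  have hq : 1 ≤ Nat.card 𝔽 := Nat.card_pos
  induction m with
  | zero =>
    rw [Nat.card_congr (Equiv.subtypeUnivEquiv fun v => by simp [hypQ]), Nat.card_fun,
      Nat.card_fin]
    simp only [mul_zero, pow_zero, one_mul]
    omega
  | succ m ih =>
    rw [card_isotropic_succ]
    zify [hq] at ih ⊢
    linear_combination (Nat.card 𝔽 : ℤ) * ih

end Cone

namespace Projectivization

open scoped LinearAlgebra.Projectivization

theorem card_subtype_eq_ncard_mul_add_one {k V : Type*} [DivisionRing k]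
    [AddCommGroup V] [Module k V] [Finite V] {p : V → Prop} (hp0 : p 0)
    (hp : ∀ (c : kˣ) (v : V), p (c • v) ↔ p v) :
    Nat.card {v : V // p v} = {P : ℙ k V | p P.rep}.ncard * Nat.card kˣ + 1 := by
  let e := nonZeroEquivProjectivizationProdUnits k V
  have he : ∀ w : {v : V // v ≠ 0}, p w ↔ p (e w).1.rep := fun w => by
    obtain ⟨a, ha⟩ := exists_smul_eq_mk_rep k w.1 w.2
    change p w ↔ p (mk k w.1 w.2).rep
    rw [← ha, hp]
  have hne : Nat.card {v // p v ∧ ¬v = 0} = {P : ℙ k V | p P.rep}.ncard * Nat.card kˣ :=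
    calc Nat.card {v // p v ∧ ¬v = 0}
        = Nat.card {w : {v : V // v ≠ 0} // p w} :=
          Nat.card_congr ((Equiv.subtypeSubtypeEquivSubtypeInter (· ≠ 0) p).trans
            (Equiv.subtypeEquivRight fun _ => and_comm)).symm
      _ = Nat.card {x : ℙ k V × kˣ // p x.1.rep} := Nat.card_congr (e.subtypeEquiv he)
      _ = Nat.card ({P : ℙ k V // p P.rep} × kˣ) :=
          Nat.card_congr (Equiv.prodSubtypeFstEquivSubtypeProd (p := fun P : ℙ k V => p P.rep))
      _ = _ := by rw [Nat.card_prod]; rfl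
  have hzero : Nat.card {v // p v ∧ v = 0} = 1 :=
    Nat.card_eq_one_iff_exists.mpr ⟨⟨0, hp0, rfl⟩, fun v => Subtype.ext v.2.2⟩
  rw [← Nat.card_subtype_and_add_card_subtype_and_not p (· = 0), hzero, hne, add_comm]

end Projectivization

lemma thgeom_succ (q k : ℕ) : thgeom q (k + 1) = thgeom q k + q ^ k :=
  Finset.sum_range_succ _ _

lemma thgeom_pos {q k : ℕ} (hq : 0 < q) (hk : 0 < k) : 0 < thgeom q k :=
  Finset.sum_pos (fun i _ => pow_pos hq i) (Finset.nonempty_range_iff.mpr hk.ne')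

lemma thgeom_mul_sub_one (q k : ℕ) : (thgeom q k : ℤ) * (q - 1) = (q : ℤ) ^ k - 1 := by
  push_cast [thgeom]
  exact geom_sum_mul _ _

section Points

variable [Finite 𝔽] {m : ℕ}

lemma ncard_Qset :
    (Qset 𝔽 (m + 1)).ncard = thgeom (Nat.card 𝔽) (m + 1) * (Nat.card 𝔽 ^ m + 1) := by
  have hq : 1 < Nat.card 𝔽 := Finite.one_lt_card
  have hcone := Projectivization.card_subtype_eq_ncard_mul_add_one (k := 𝔽)
    (V := Fin (2 * (m + 1)) → 𝔽)
    (p := fun v => hypQ (m + 1) v = 0) hypQ_zero (fun c v => by simp [Units.smul_def, hypQ_smul])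
  have hN := card_isotropic_mul (𝔽 := 𝔽) (m := m + 1)
  have ht := thgeom_mul_sub_one (Nat.card 𝔽) (m + 1)
  rw [hcone, Nat.card_units] at hN
  rw [show Qset 𝔽 (m + 1) = {P | hypQ (m + 1) P.rep = 0} from rfl]
  zify [hq.le] at hN ⊢
  have hq0 : ((Nat.card 𝔽 : ℤ) - 1) * Nat.card 𝔽 ≠ 0 := by
    have : (1 : ℤ) < Nat.card 𝔽 := mod_cast hq
    positivity
  apply mul_right_cancel₀ hq0
  linear_combination hN - (Nat.card 𝔽 ^ m + 1) * (Nat.card 𝔽 : ℤ) * ht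

lemma ncard_perp {P : Projectivization 𝔽 (Fin (2 * (m + 1)) → 𝔽)} (hP : P ∈ Qset 𝔽 (m + 1)) :
    (perp P).ncard = thgeom (Nat.card 𝔽) m * (Nat.card 𝔽 ^ m + 1) + Nat.card 𝔽 ^ m := by
  have hq : 1 < Nat.card 𝔽 := Finite.one_lt_card
  have hu : hypQ (m + 1) P.rep = 0 := hP
  have hcone := Projectivization.card_subtype_eq_ncard_mul_add_one (k := 𝔽)
    (V := Fin (2 * (m + 1)) → 𝔽)
    (p := fun v => hypQ (m + 1) v = 0 ∧ hypB (m + 1) P.rep v = 0) ⟨hypQ_zero, hypB_zero_right _⟩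
    (fun c v => by simp [Units.smul_def, hypQ_smul, hypB_smul_right])
  have hsplit := Nat.card_subtype_and_add_card_subtype_and_not (fun v => hypQ (m + 1) v = 0)
    (fun v => hypB (m + 1) P.rep v = 0)
  have hnc := card_isotropic_hypB_ne_zero_succ P.rep_nonzero hu
  have hN := card_isotropic_mul (𝔽 := 𝔽) (m := m + 1)
  have ht := thgeom_mul_sub_one (Nat.card 𝔽) m
  rw [hcone, hnc, Nat.card_units] at hsplit
  rw [← hsplit] at hN
  rw [show perp P = {P' | hypQ (m + 1) P'.rep = 0 ∧ hypB (m + 1) P.rep P'.rep = 0} from rfl]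
  zify [hq.le] at hN ⊢
  have hq0 : ((Nat.card 𝔽 : ℤ) - 1) * Nat.card 𝔽 ≠ 0 := by
    have : (1 : ℤ) < Nat.card 𝔽 := mod_cast hq
    positivity
  apply mul_right_cancel₀ hq0
  linear_combination hN - (Nat.card 𝔽 ^ m + 1) * (Nat.card 𝔽 : ℤ) * ht

end Points

theorem finsum_mem_const {α M : Type*} [AddCommMonoid M] {s : Set α} (hs : s.Finite) (c : M) :
    ∑ᶠ _ ∈ s, c = s.ncard • c := by
  rw [finsum_mem_eq_finite_toFinset_sum _ hs, Finset.sum_const, Set.ncard_eq_toFinset_card s hs]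

theorem finsum_mem_finsum_mem_sep_of_ncard_eq {α M : Type*} [Finite α] [AddCommMonoid M]
    {s : Set α} {r : α → α → Prop} (hr : Std.Symm r) {c : ℕ}
    (hc : ∀ a ∈ s, {b ∈ s | r a b}.ncard = c) (f : α → M) :
    ∑ᶠ a ∈ s, ∑ᶠ b ∈ {b ∈ s | r a b}, f b = c • ∑ᶠ b ∈ s, f b := by
  classical
  have := Fintype.ofFinite α
  simp only [finsum_mem_eq_toFinset_sum]
  rw [Finset.sum_comm' (t' := s.toFinset) (s' := fun b => {a ∈ s | r b a}.toFinset)]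
  · rw [Finset.smul_sum]
    refine Finset.sum_congr rfl fun b hb => ?_
    rw [Finset.sum_const, ← Set.ncard_eq_toFinset_card', hc b (Set.mem_toFinset.mp hb)]
  · intro a b
    simp only [Set.mem_toFinset, Set.mem_sep_iff]
    exact ⟨fun ⟨ha, hb, hab⟩ => ⟨⟨ha, hr.symm _ _ hab⟩, hb⟩,
      fun ⟨⟨ha, hba⟩, hb⟩ => ⟨ha, hb, hr.symm _ _ hba⟩⟩

lemma collin_symm {m : ℕ} :
    Std.Symm (Collin : Projectivization 𝔽 (Fin (2 * m) → 𝔽) → _ → Prop) :=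
  ⟨fun P P' h => by rwa [Collin, hypB_comm]⟩

theorem sum_mu_eq_general
    {𝔽 : Type} [Field 𝔽] [Fintype 𝔽] (q n x : ℕ) (hq : Fintype.card 𝔽 = q) (hn : 2 ≤ n)
    (μ : Projectivization 𝔽 (Fin (2 * n) → 𝔽) → ℤ)
    (hstar : PropStar q n x μ) :
    ∑ᶠ P ∈ Qset 𝔽 n, μ P = (x : ℤ) * thgeom q n := by
  obtain ⟨m, rfl⟩ : ∃ m, n = m + 1 := ⟨n - 1, by omega⟩
  rw [← Nat.card_eq_fintype_card] at hq
  subst hq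
  have hdouble : ∑ᶠ P ∈ Qset 𝔽 (m + 1), ∑ᶠ P' ∈ perp P, μ P' =
      (thgeom (Nat.card 𝔽) m * (Nat.card 𝔽 ^ m + 1) + Nat.card 𝔽 ^ m) •
        ∑ᶠ P ∈ Qset 𝔽 (m + 1), μ P :=
    finsum_mem_finsum_mem_sep_of_ncard_eq collin_symm (fun P hP => ncard_perp hP) μ
  have hstar_sum : ∑ᶠ P ∈ Qset 𝔽 (m + 1), ∑ᶠ P' ∈ perp P, μ P' =
      (Qset 𝔽 (m + 1)).ncard * (x * thgeom (Nat.card 𝔽) m) +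
        Nat.card 𝔽 ^ m * ∑ᶠ P ∈ Qset 𝔽 (m + 1), μ P := by
    rw [finsum_mem_congr rfl hstar, finsum_mem_add_distrib (Set.toFinite _),
      finsum_mem_const (Set.toFinite _), ← mul_finsum_mem, nsmul_eq_mul, Nat.add_sub_cancel]
  rw [hdouble, ncard_Qset, thgeom_succ] at hstar_sum
  have ht : 0 < thgeom (Nat.card 𝔽) m := thgeom_pos Nat.card_pos (by omega)
  rw [thgeom_succ]
  apply mul_left_cancel₀ (a := ((thgeom (Nat.card 𝔽) m * (Nat.card 𝔽 ^ m + 1) : ℕ) : ℤ))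
    (by positivity)
  push_cast [nsmul_eq_mul] at hstar_sum ⊢
  linear_combination hstar_sum

/-- If `μ : Q⁺(2n−1,q) → ℤ` satisfies Property (*) with parameter
`x > 0`, then `Σ_{P∈Q} μ(P) = x·θ_{n−1}`. -/
theorem sum_mu_eq
    {𝔽 : Type} [Field 𝔽] [Fintype 𝔽] (q n x : ℕ) (hq : Fintype.card 𝔽 = q) (hn : 2 ≤ n)
    (hx : 0 < x)
    (μ : Projectivization 𝔽 (Fin (2 * n) → 𝔽) → ℤ)
    (hstar : PropStar q n x μ) :
    ∑ᶠ P ∈ Qset 𝔽 n, μ P = (x : ℤ) * thgeom q n :=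
  sum_mu_eq_general q n x hq hn μ hstar
end
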